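/- arXiv:1405.1114 — 6 statements merged into one kernel-verified Lean document; each statement's English description precedes it below -/
import Mathlib

section
/- filterIFS completeness: For G = (V,E) valid and E_σ = filterIFS G M [] E (with E given as a list enumerating the edge set), no non-empty X ⊆ E \ E_σ can be added while preserving all IFS invariants: for all nonempty X ⊆ E \ E_σ, ¬ (∀ m ∈ getIFS M. m (α (V, E, E_σ ∪ X))). -/
def backflows {α : Type*} (X : Set (α × α)) : Set (α × α) :=
  {e | (e.2, e.1) ∈ X}

def offending_flows {α : Type*} (m : Set α → Set (α × α) → Prop)
    (V : Set α) (E : Set (α × α)) : Set (Set (α × α)) :=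
  {F | F ⊆ E ∧ ¬ m V E ∧ m V (E \ F) ∧ ∀ e ∈ F, ¬ m V ((E \ F) ∪ {e})}

def get_offending_flows {α : Type*} (M : Set (Set α → Set (α × α) → Prop))
    (V : Set α) (E : Set (α × α)) : Set (Set (α × α)) :=
  ⋃ m ∈ M, offending_flows m V E

inductive Strategy : Type
  | IFS : Strategy
  | ACS : Strategy

structure SecurityInvariant (α : Type*) where
  pred : Set α → Set (α × α) → Prop
  strat : Strategy

/-- the predicates of the IFS-tagged invariants -/
def getIFS {α : Type*} (M : Set (SecurityInvariant α)) :
    Set (Set α → Set (α × α) → Prop) :=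
  {f | ∃ m ∈ M, m.strat = Strategy.IFS ∧ f = m.pred}

/-- the predicates of the ACS-tagged invariants -/
def getACS {α : Type*} (M : Set (SecurityInvariant α)) :
    Set (Set α → Set (α × α) → Prop) :=
  {f | ∃ m ∈ M, m.strat = Strategy.ACS ∧ f = m.pred}

open Classical in
/-- greedy IFS filter; list accumulators are read as sets via `{x | x ∈ ·}` -/
noncomputable def filterIFS {α : Type*} (V : Set α) (E : Set (α × α))
    (M : Set (SecurityInvariant α)) :
    List (α × α) → List (α × α) → List (α × α)
  | a, [] => a
  | a, e :: es =>
    if ∀ m ∈ getIFS M,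
        m V (E ∪ {x | x ∈ e :: a} ∪ backflows {x | x ∈ e :: a})
    then filterIFS V E M (e :: a) es
    else filterIFS V E M a es

open Classical in
/-- greedy ACS filter -/
noncomputable def filterACS {α : Type*} (V : Set α) (E : Set (α × α))
    (M : Set (SecurityInvariant α)) :
    List (α × α) → List (α × α) → List (α × α)
  | a, [] => a
  | a, e :: es =>
    if e ∉ backflows E ∧
        ∀ F ∈ get_offending_flows (getACS M) V
            (E ∪ {x | x ∈ e :: a} ∪ backflows {x | x ∈ e :: a}),
          F ⊆ backflows {x | x ∈ e :: a}
    then filterACS V E M (e :: a) es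
    else filterACS V E M a es

/-!
An edge `e ∈ E` left out by the greedy filter was rejected at the moment it was examined: some
IFS invariant failed for the accumulator `a'` of that moment extended by `e`. Since `a'` is
contained in the final output `E_σ` and `e ∈ X`, the set `E_σ ∪ X` contains `e :: a'`, so by
monotonicity that invariant fails for `E_σ ∪ X` as well.
-/

section

variable {α : Type*}

/-- The condition tested by `filterIFS`: all IFS invariants hold on `α (V, E, A)`. -/
def IFSCompliant (M : Set (SecurityInvariant α)) (V : Set α) (E A : Set (α × α)) : Prop :=
  ∀ m ∈ getIFS M, m V (E ∪ A ∪ backflows A)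

theorem backflows_mono {A B : Set (α × α)} (h : A ⊆ B) : backflows A ⊆ backflows B :=
  fun _ hx => h hx

theorem IFSCompliant.mono {M : Set (SecurityInvariant α)} {V : Set α} {E A B : Set (α × α)}
    (h_mono : ∀ m ∈ M, ∀ (V' : Set α) (E₁ E₂ : Set (α × α)),
      m.pred V' E₁ → E₂ ⊆ E₁ → m.pred V' E₂)
    (hAB : A ⊆ B) (hB : IFSCompliant M V E B) : IFSCompliant M V E A := by
  rintro _ ⟨m, hm, hIFS, rfl⟩
  exact h_mono m hm V _ _ (hB m.pred ⟨m, hm, hIFS, rfl⟩)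
    (Set.union_subset_union (Set.union_subset_union_right E hAB) (backflows_mono hAB))

section filterIFS

variable {V : Set α} {E : Set (α × α)} {M : Set (SecurityInvariant α)}

open Classical in
theorem filterIFS_cons (a : List (α × α)) (e : α × α) (es : List (α × α)) :
    filterIFS V E M a (e :: es) =
      if IFSCompliant M V E {x | x ∈ e :: a} then filterIFS V E M (e :: a) es
      else filterIFS V E M a es := by
  rw [filterIFS]
  rfl

theorem subset_filterIFS (l a : List (α × α)) : a ⊆ filterIFS V E M a l := by
  induction l generalizing a with
  | nil => simp [filterIFS]
  | cons e es ih =>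
    rw [filterIFS_cons]
    split_ifs
    · exact List.Subset.trans (List.subset_cons_self e a) (ih (e :: a))
    · exact ih a

theorem exists_not_IFSCompliant_of_not_mem_filterIFS {l a : List (α × α)} {e : α × α}
    (he : e ∈ l) (hne : e ∉ filterIFS V E M a l) :
    ∃ a' ⊆ filterIFS V E M a l, ¬ IFSCompliant M V E {x | x ∈ e :: a'} := by
  induction l generalizing a with
  | nil => simp at he
  | cons e' es ih =>
    rw [filterIFS_cons] at hne ⊢
    split_ifs at hne ⊢ with hc
    · rcases List.mem_cons.mp he with rfl | hes
      · exact absurd (subset_filterIFS es _ List.mem_cons_self) hne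
      · exact ih hes hne
    · rcases List.mem_cons.mp he with rfl | hes
      · exact ⟨a, subset_filterIFS es a, hc⟩
      · exact ih hes hne

end filterIFS

end

theorem stmt_11_general {α : Type*} (M : Set (SecurityInvariant α))
    (V : Set α) (E : Set (α × α)) (L : List (α × α))
    (h_mono : ∀ m ∈ M, ∀ (V' : Set α) (E₁ E₂ : Set (α × α)),
        m.pred V' E₁ → E₂ ⊆ E₁ → m.pred V' E₂)
    (hL : {x | x ∈ L} = E) :
    ∀ X ⊆ E \ {x | x ∈ filterIFS V E M [] L}, X ≠ ∅ →
      ¬ (∀ m ∈ getIFS M,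
          m V (E ∪ ({x | x ∈ filterIFS V E M [] L} ∪ X) ∪
            backflows ({x | x ∈ filterIFS V E M [] L} ∪ X))) := by
  intro X hX hXne hall
  obtain ⟨e, heX⟩ := Set.nonempty_iff_ne_empty.mpr hXne
  obtain ⟨heE, hnot⟩ := hX heX
  have heL : e ∈ L := by rwa [← hL] at heE
  obtain ⟨a', ha', hrej⟩ := exists_not_IFSCompliant_of_not_mem_filterIFS heL hnot
  refine hrej (IFSCompliant.mono h_mono ?_ hall)
  intro x hx
  rcases List.mem_cons.mp hx with rfl | hx
  · exact Or.inr heX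
  · exact Or.inl (ha' hx)

theorem stmt_11 {α : Type*} (M : Set (SecurityInvariant α))
    (V : Set α) (E : Set (α × α)) (L : List (α × α))
    (h_empty : ∀ m ∈ M, ∀ V' : Set α, m.pred V' ∅)
    (h_mono : ∀ m ∈ M, ∀ (V' : Set α) (E₁ E₂ : Set (α × α)),
        m.pred V' E₁ → E₂ ⊆ E₁ → m.pred V' E₂)
    (h_valid : ∀ m ∈ M, m.pred V E)
    (hL : {x | x ∈ L} = E) :
    ∀ X ⊆ E \ {x | x ∈ filterIFS V E M [] L}, X ≠ ∅ →
      ¬ (∀ m ∈ getIFS M,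
          m V (E ∪ ({x | x ∈ filterIFS V E M [] L} ∪ X) ∪
            backflows ({x | x ∈ filterIFS V E M [] L} ∪ X))) :=
  stmt_11_general M V E L h_mono hL
end

section
/- filterACS soundness: For a valid directed policy G = (V,E) and any list X of edges of E, with E_σ = filterACS G M [] X, the stateful policy T = (V, E, E_σ) satisfies ⋃ get_offending_flows (getACS M) (α T) ⊆ backflows(E_σ) \ E. -/
theorem filterACS_aux {α : Type*} (M : Set (SecurityInvariant α)) (V : Set α)
    (E : Set (α × α)) (X : List (α × α)) : ∀ a : List (α × α),
    (⋃₀ get_offending_flows (getACS M) V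
        (E ∪ {x | x ∈ a} ∪ backflows {x | x ∈ a}) ⊆ backflows {x | x ∈ a}) →
    (∀ e ∈ a, e ∉ backflows E) →
    (⋃₀ get_offending_flows (getACS M) V
        (E ∪ {x | x ∈ filterACS V E M a X} ∪
          backflows {x | x ∈ filterACS V E M a X}) ⊆
      backflows {x | x ∈ filterACS V E M a X}) ∧
    (∀ e ∈ filterACS V E M a X, e ∉ backflows E) := by
  induction X with
  | nil => intro a h1 h2; rw [filterACS]; exact ⟨h1, h2⟩
  | cons e es ih =>
    intro a h1 h2
    rw [filterACS]
    by_cases hc : e ∉ backflows E ∧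
        ∀ F ∈ get_offending_flows (getACS M) V
            (E ∪ {x | x ∈ e :: a} ∪ backflows {x | x ∈ e :: a}),
          F ⊆ backflows {x | x ∈ e :: a}
    · rw [if_pos hc]
      refine ih (e :: a) (Set.sUnion_subset hc.2) ?_
      intro x hx
      rcases List.mem_cons.mp hx with rfl | hx
      exacts [hc.1, h2 x hx]
    · rw [if_neg hc]; exact ih a h1 h2

theorem stmt_12 {α : Type*} (M : Set (SecurityInvariant α))
    (V : Set α) (E : Set (α × α)) (X : List (α × α))
    (h_empty : ∀ m ∈ M, ∀ V' : Set α, m.pred V' ∅)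
    (h_mono : ∀ m ∈ M, ∀ (V' : Set α) (E₁ E₂ : Set (α × α)),
        m.pred V' E₁ → E₂ ⊆ E₁ → m.pred V' E₂)
    (h_valid : ∀ m ∈ M, m.pred V E)
    (hX : ∀ e ∈ X, e ∈ E) :
    ⋃₀ get_offending_flows (getACS M) V
        (E ∪ {x | x ∈ filterACS V E M [] X} ∪
          backflows {x | x ∈ filterACS V E M [] X}) ⊆
      backflows {x | x ∈ filterACS V E M [] X} \ E := by
  have hnil : {x : α × α | x ∈ ([] : List (α × α))} = (∅ : Set (α × α)) := by
    ext x; simp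
  have hback : backflows (∅ : Set (α × α)) = ∅ := by
    ext x; simp [backflows]
  have base1 : ⋃₀ get_offending_flows (getACS M) V
      (E ∪ {x | x ∈ ([] : List (α × α))} ∪ backflows {x | x ∈ ([] : List (α × α))}) ⊆
      backflows {x | x ∈ ([] : List (α × α))} := by
    rw [hnil, hback, Set.union_empty, Set.union_empty]
    intro x hx
    obtain ⟨F, hF, hxF⟩ := hx
    obtain ⟨m, hm, hFm⟩ := Set.mem_iUnion₂.mp hF
    obtain ⟨m', hm'M, _, rfl⟩ := hm
    exact absurd (h_valid m' hm'M) hFm.2.1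
  have base2 : ∀ e ∈ ([] : List (α × α)), e ∉ backflows E := by simp
  obtain ⟨h1, h2⟩ := filterACS_aux M V E X [] base1 base2
  intro x hx
  refine ⟨h1 hx, ?_⟩
  intro hxE
  have hmem : (x.2, x.1) ∈ filterACS V E M [] X := h1 hx
  exact h2 _ hmem (by simpa [backflows] using hxE)
end

section
/- generate1 soundness: For a valid directed policy G = (V,E), the stateful policy generate1 G M e = (V, E, filterACS G M (filterIFS G M e)) satisfies both: (i) all IFS invariants hold on α of the result, and (ii) ⋃ get_offending_flows (getACS M) (α of the result) ⊆ backflows(E_σ) \ E, where E_σ is the computed stateful edge set. -/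
lemma filterACS_mem {α : Type*} (V : Set α) (E : Set (α × α))
    (M : Set (SecurityInvariant α)) :
    ∀ (l a : List (α × α)) (x : α × α), x ∈ filterACS V E M a l → x ∈ a ∨ x ∈ l := by
  intro l
  induction l with
  | nil => intro a x hx; exact Or.inl hx
  | cons e es ih =>
    intro a x hx
    unfold filterACS at hx
    split_ifs at hx with h
    · rcases ih (e :: a) x hx with h' | h'
      · rcases List.mem_cons.mp h' with h'' | h''
        · exact Or.inr (by simp [h''])
        · exact Or.inl h''
      · exact Or.inr (by simp [h'])
    · rcases ih a x hx with h' | h'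
      · exact Or.inl h'
      · exact Or.inr (by simp [h'])

lemma filterIFS_sound {α : Type*} (V : Set α) (E : Set (α × α))
    (M : Set (SecurityInvariant α)) :
    ∀ (l a : List (α × α)),
      (∀ m ∈ getIFS M, m V (E ∪ {x | x ∈ a} ∪ backflows {x | x ∈ a})) →
      ∀ m ∈ getIFS M,
        m V (E ∪ {x | x ∈ filterIFS V E M a l} ∪
          backflows {x | x ∈ filterIFS V E M a l}) := by
  intro l
  induction l with
  | nil => intro a ha; simpa [filterIFS] using ha
  | cons e es ih =>
    intro a ha
    unfold filterIFS
    split_ifs with h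
    · exact ih (e :: a) h
    · exact ih a ha

lemma filterACS_sound {α : Type*} (V : Set α) (E : Set (α × α))
    (M : Set (SecurityInvariant α)) :
    ∀ (l a : List (α × α)),
      (∀ y ∈ a, y ∉ backflows E) →
      (⋃₀ get_offending_flows (getACS M) V
          (E ∪ {x | x ∈ a} ∪ backflows {x | x ∈ a}) ⊆
        backflows {x | x ∈ a} \ E) →
      (∀ y ∈ filterACS V E M a l, y ∉ backflows E) ∧
      (⋃₀ get_offending_flows (getACS M) V
          (E ∪ {x | x ∈ filterACS V E M a l} ∪
            backflows {x | x ∈ filterACS V E M a l}) ⊆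
        backflows {x | x ∈ filterACS V E M a l} \ E) := by
  intro l
  induction l with
  | nil => intro a hQ hP; exact ⟨hQ, hP⟩
  | cons e es ih =>
    intro a hQ hP
    unfold filterACS
    split_ifs with h
    · obtain ⟨he', hF⟩ := h
      apply ih (e :: a)
      · intro y hy
        rcases List.mem_cons.mp hy with h' | h'
        · rw [h']; exact he'
        · exact hQ y h'
      · intro x hx
        obtain ⟨F, hFmem, hxF⟩ := hx
        have hxb : x ∈ backflows {x | x ∈ e :: a} := hF F hFmem hxF
        refine ⟨hxb, ?_⟩
        intro hxE
        rcases List.mem_cons.mp hxb with h' | h'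
        · apply he'
          show (e.2, e.1) ∈ E
          have : e = (x.2, x.1) := h'.symm
          rw [this]; exact hxE
        · exact hQ (x.2, x.1) h' hxE
    · exact ih a hQ hP

theorem stmt_14 {α : Type*} (M : Set (SecurityInvariant α))
    (V : Set α) (E : Set (α × α)) (e : List (α × α))
    (h_empty : ∀ m ∈ M, ∀ V' : Set α, m.pred V' ∅)
    (h_mono : ∀ m ∈ M, ∀ (V' : Set α) (E₁ E₂ : Set (α × α)),
        m.pred V' E₁ → E₂ ⊆ E₁ → m.pred V' E₂)
    (h_valid : ∀ m ∈ M, m.pred V E)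
    (he : ∀ x ∈ e, x ∈ E) :
    (∀ m ∈ getIFS M,
      m V (E ∪ {x | x ∈ filterACS V E M [] (filterIFS V E M [] e)} ∪
        backflows {x | x ∈ filterACS V E M [] (filterIFS V E M [] e)})) ∧
    (⋃₀ get_offending_flows (getACS M) V
        (E ∪ {x | x ∈ filterACS V E M [] (filterIFS V E M [] e)} ∪
          backflows {x | x ∈ filterACS V E M [] (filterIFS V E M [] e)}) ⊆
      backflows {x | x ∈ filterACS V E M [] (filterIFS V E M [] e)} \ E) := by
  have hnil : {x : α × α | x ∈ ([] : List (α × α))} = ∅ := by simp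
  have hbnil : backflows (∅ : Set (α × α)) = ∅ := by
    ext x; simp [backflows]
  -- IFS invariants hold on the filterIFS result
  have hIFS1 : ∀ m ∈ getIFS M,
      m V (E ∪ {x | x ∈ filterIFS V E M [] e} ∪
        backflows {x | x ∈ filterIFS V E M [] e}) := by
    apply filterIFS_sound
    intro m hm
    obtain ⟨m', hm', _, rfl⟩ := hm
    rw [hnil, hbnil]
    simpa using h_valid m' hm'
  have hsub : ∀ x ∈ filterACS V E M [] (filterIFS V E M [] e),
      x ∈ filterIFS V E M [] e := by
    intro x hx
    rcases filterACS_mem V E M _ [] x hx with h | h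
    · simp at h
    · exact h
  constructor
  · intro m hm
    obtain ⟨m', hm', hstrat, rfl⟩ := hm
    refine h_mono m' hm' V _ _ (hIFS1 m'.pred ⟨m', hm', hstrat, rfl⟩) ?_
    intro x hx
    rcases hx with hx | hx
    · rcases hx with hx | hx
      · exact Or.inl (Or.inl hx)
      · exact Or.inl (Or.inr (hsub x hx))
    · exact Or.inr (hsub _ hx)
  · refine (filterACS_sound V E M (filterIFS V E M [] e) [] ?_ ?_).2
    · intro y hy; simp at hy
    · rw [hnil, hbnil]
      intro x hx
      obtain ⟨F, hF, hxF⟩ := hx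
      obtain ⟨m, hm, hFm⟩ := by simpa [get_offending_flows] using hF
      obtain ⟨m', hm', _, rfl⟩ := hm
      exfalso
      exact hFm.2.1 (by simpa using h_valid m' hm')
end

section
/- If M contains no IFS invariants and the ACS invariants have no side effects in the sense that ⋃ get_offending_flows (getACS M) (V, E ∪ backflows(E)) ⊆ backflows(E) \ E holds, then generate1 G M E (run over all edges) returns E_σ with E ∖ backflows(E) ⊆ E_σ, so that α (generate1 G M E) = (V, E ∪ backflows(E)). -/
/-! A greedy step may add `e ∈ E \ backflows E` together with its backflow: the resulting graph
lies inside `E ∪ backflows E`, and an offending flow of a subgraph extends to an offending flow of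
the whole (finite) graph through any of its edges. By the no-side-effects hypothesis that edge is a
backflow outside `E`, so offending flows of the augmented graph consist of selected backflows and
the ACS filter accepts `e`. -/

open Set

section Backflows

variable {α : Type*} {E S : Set (α × α)}

lemma backflows_subset_backflows (h : S ⊆ E) : backflows S ⊆ backflows E :=
  fun _ hx => h hx

lemma Set.Finite.backflows (hE : E.Finite) : (backflows E).Finite :=
  hE.preimage Prod.swap_injective.injOn

lemma union_union_backflows_subset (h : S ⊆ E) :
    E ∪ S ∪ backflows S ⊆ E ∪ backflows E :=
  union_subset (union_subset subset_union_left (h.trans subset_union_left))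
    ((backflows_subset_backflows h).trans subset_union_right)

lemma union_union_backflows_eq (hS : E \ backflows E ⊆ S) (h : S ⊆ E) :
    E ∪ S ∪ backflows S = E ∪ backflows E := by
  refine (union_union_backflows_subset h).antisymm ?_
  rintro x (hx | hx)
  · exact .inl (.inl hx)
  · by_cases hxE : x ∈ E
    · exact .inl (.inl hxE)
    · exact .inr (hS ⟨hx, hxE⟩)

end Backflows

section OffendingFlows

variable {α : Type*} {m : Set α → Set (α × α) → Prop} {V : Set α}

lemma exists_mem_offending_flows (hm : Antitone (m V)) {X F : Set (α × α)} (hX : X.Finite)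
    (hFX : F ⊆ X) (hF : m V (X \ F)) {f : α × α} (hf : f ∈ F)
    (hfF : ¬ m V (X \ F ∪ {f})) :
    ∃ F' ∈ offending_flows m V X, f ∈ F' := by
  let C : Set (Set (α × α)) := {F' | F' ⊆ X ∧ f ∈ F' ∧ m V (X \ F')}
  have hC : C.Finite := hX.finite_subsets.subset fun _ h => h.1
  obtain ⟨F', hF'F, hmin⟩ := hC.exists_le_minimal (show F ∈ C from ⟨hFX, hf, hF⟩)
  obtain ⟨hF'X, hfF', hmF'⟩ := hmin.prop
  refine ⟨F', ⟨hF'X, fun hmX => hfF (hm ?_ hmX), hmF', fun e he hme => ?_⟩, hfF'⟩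
  · exact union_subset sdiff_subset (singleton_subset_iff.2 (hFX hf))
  by_cases hef : e = f
  · subst hef
    exact hfF (hm (union_subset_union_left _ (sdiff_subset_sdiff_right hF'F)) hme)
  -- otherwise `F' \ {e}` would be a smaller member of `C`
  have hrest : X \ (F' \ {e}) = X \ F' ∪ {e} := by
    rw [sdiff_sdiff_right, inter_eq_right.2 (singleton_subset_iff.2 (hF'X he))]
  have hsmaller : F' \ {e} ∈ C := ⟨sdiff_subset.trans hF'X, ⟨hfF', Ne.symm hef⟩, hrest ▸ hme⟩
  exact (hmin.2 hsmaller sdiff_subset he).2 rfl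

lemma exists_mem_offending_flows_of_subset (hm : Antitone (m V)) {G G' F : Set (α × α)}
    (hG : G.Finite) (hG'G : G' ⊆ G) (hF : F ∈ offending_flows m V G') {f : α × α}
    (hf : f ∈ F) :
    ∃ F' ∈ offending_flows m V G, f ∈ F' := by
  obtain ⟨hFG', -, hmF, hminF⟩ := hF
  -- in `G`, remove `F` together with everything outside `G'`
  have hrest : G \ (G \ (G' \ F)) = G' \ F := sdiff_sdiff_cancel_left (sdiff_subset.trans hG'G)
  exact exists_mem_offending_flows hm hG sdiff_subset (hrest ▸ hmF)
    ⟨hG'G (hFG' hf), fun h => h.2 hf⟩ (by rw [hrest]; exact hminF f hf)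

lemma sUnion_get_offending_flows_subset {N : Set (Set α → Set (α × α) → Prop)}
    (hN : ∀ m ∈ N, Antitone (m V)) {G G' : Set (α × α)} (hG : G.Finite) (hG'G : G' ⊆ G) :
    ⋃₀ get_offending_flows N V G' ⊆ ⋃₀ get_offending_flows N V G := by
  rintro f ⟨F, hF, hf⟩
  obtain ⟨m, hmN, hF⟩ := mem_iUnion₂.1 hF
  obtain ⟨F', hF', hf'⟩ := exists_mem_offending_flows_of_subset (hN m hmN) hG hG'G hF hf
  exact ⟨F', mem_iUnion₂.2 ⟨m, hmN, hF'⟩, hf'⟩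

lemma subset_backflows_of_mem_get_offending_flows {N : Set (Set α → Set (α × α) → Prop)}
    (hN : ∀ m ∈ N, Antitone (m V)) {E S : Set (α × α)} (hE : E.Finite)
    (hside : ⋃₀ get_offending_flows N V (E ∪ backflows E) ⊆ backflows E \ E) (hSE : S ⊆ E)
    {F : Set (α × α)} (hF : F ∈ get_offending_flows N V (E ∪ S ∪ backflows S)) :
    F ⊆ backflows S := by
  intro f hf
  have hfE : f ∉ E := (hside (sUnion_get_offending_flows_subset hN (hE.union hE.backflows)
    (union_union_backflows_subset hSE) ⟨F, hF, hf⟩)).2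
  obtain ⟨m, -, hFG', -⟩ := mem_iUnion₂.1 hF
  rcases hFG' hf with (hfE' | hfS) | hfS
  · exact absurd hfE' hfE
  · exact absurd (hSE hfS) hfE
  · exact hfS

end OffendingFlows

section Filters

variable {α : Type*} {V : Set α} {E : Set (α × α)} {M : Set (SecurityInvariant α)}

lemma filterIFS_eq_reverse_append (h : getIFS M = ∅) (a l : List (α × α)) :
    filterIFS V E M a l = l.reverse ++ a := by
  induction l generalizing a with
  | nil => rfl
  | cons e es ih => rw [filterIFS, if_pos (by simp [h]), ih]; simp

lemma mem_filterACS_of_mem_left {a l : List (α × α)} {x : α × α} (hx : x ∈ a) :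
    x ∈ filterACS V E M a l := by
  induction l generalizing a with
  | nil => exact hx
  | cons e es ih =>
    rw [filterACS]
    split_ifs
    exacts [ih (List.mem_cons_of_mem e hx), ih hx]

lemma mem_or_mem_of_mem_filterACS {a l : List (α × α)} {x : α × α}
    (hx : x ∈ filterACS V E M a l) : x ∈ a ∨ x ∈ l := by
  induction l generalizing a with
  | nil => exact .inl hx
  | cons e es ih =>
    rw [filterACS] at hx
    split_ifs at hx <;> have := ih hx <;> simp only [List.mem_cons] at this ⊢ <;> tauto

lemma mem_filterACS (hM : ∀ m ∈ getACS M, Antitone (m V)) (hE : E.Finite)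
    (hside : ⋃₀ get_offending_flows (getACS M) V (E ∪ backflows E) ⊆ backflows E \ E)
    {a l : List (α × α)} (ha : ∀ y ∈ a, y ∈ E) (hl : ∀ y ∈ l, y ∈ E) {x : α × α}
    (hx : x ∈ l) (hxE : x ∉ backflows E) :
    x ∈ filterACS V E M a l := by
  induction l generalizing a with
  | nil => simp at hx
  | cons e es ih =>
    have hea : ∀ y ∈ e :: a, y ∈ E := by
      rintro y (_ | ⟨_, hy⟩)
      exacts [hl e List.mem_cons_self, ha y hy]
    have hes : ∀ y ∈ es, y ∈ E := fun y hy => hl y (List.mem_cons_of_mem e hy)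
    rw [filterACS]
    split_ifs with hpass
    · rcases List.mem_cons.1 hx with rfl | hx
      · exact mem_filterACS_of_mem_left List.mem_cons_self
      · exact ih hea hes hx
    · rcases List.mem_cons.1 hx with rfl | hx
      · exact absurd ⟨hxE, fun F hF =>
          subset_backflows_of_mem_get_offending_flows hM hE hside hea hF⟩ hpass
      · exact ih ha hes hx

end Filters

theorem stmt_16_general {α : Type*} (M : Set (SecurityInvariant α))
    (V : Set α) (E : Set (α × α)) (L : List (α × α))
    (h_mono : ∀ m ∈ M, ∀ (V' : Set α) (E₁ E₂ : Set (α × α)),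
        m.pred V' E₁ → E₂ ⊆ E₁ → m.pred V' E₂)
    (hL : {x | x ∈ L} = E)
    (h_noIFS : getIFS M = ∅)
    (h_nosideeffects :
      ⋃₀ get_offending_flows (getACS M) V (E ∪ backflows E) ⊆ backflows E \ E) :
    E \ backflows E ⊆ {x | x ∈ filterACS V E M [] (filterIFS V E M [] L)} ∧
    E ∪ {x | x ∈ filterACS V E M [] (filterIFS V E M [] L)} ∪
        backflows {x | x ∈ filterACS V E M [] (filterIFS V E M [] L)} =
      E ∪ backflows E := by
  have hE : E.Finite := hL ▸ L.finite_toSet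
  have hACS : ∀ m ∈ getACS M, Antitone (m V) := by
    rintro _ ⟨m, hm, -, rfl⟩ E₁ E₂ h hE₂
    exact h_mono m hm V E₂ E₁ hE₂ h
  have hLE : ∀ x, x ∈ L.reverse ++ [] ↔ x ∈ E := fun x => by simpa using Set.ext_iff.1 hL x
  rw [filterIFS_eq_reverse_append h_noIFS]
  have hkeep : E \ backflows E ⊆ {x | x ∈ filterACS V E M [] (L.reverse ++ [])} :=
    fun x hx => mem_filterACS hACS hE h_nosideeffects (by simp) (fun y => (hLE y).1)
      ((hLE x).2 hx.1) hx.2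
  have hsub : {x | x ∈ filterACS V E M [] (L.reverse ++ [])} ⊆ E := fun x hx =>
    (mem_or_mem_of_mem_filterACS hx).elim (by simp) (hLE x).1
  exact ⟨hkeep, union_union_backflows_eq hkeep hsub⟩

theorem stmt_16 {α : Type*} (M : Set (SecurityInvariant α))
    (V : Set α) (E : Set (α × α)) (L : List (α × α))
    (h_empty : ∀ m ∈ M, ∀ V' : Set α, m.pred V' ∅)
    (h_mono : ∀ m ∈ M, ∀ (V' : Set α) (E₁ E₂ : Set (α × α)),
        m.pred V' E₁ → E₂ ⊆ E₁ → m.pred V' E₂)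
    (h_valid : ∀ m ∈ M, m.pred V E)
    (hL : {x | x ∈ L} = E)
    (h_noIFS : getIFS M = ∅)
    (h_nosideeffects :
      ⋃₀ get_offending_flows (getACS M) V (E ∪ backflows E) ⊆ backflows E \ E) :
    E \ backflows E ⊆ {x | x ∈ filterACS V E M [] (filterIFS V E M [] L)} ∧
    E ∪ {x | x ∈ filterACS V E M [] (filterIFS V E M [] L)} ∪
        backflows {x | x ∈ filterACS V E M [] (filterIFS V E M [] L)} =
      E ∪ backflows E :=
  stmt_16_general M V E L h_mono hL h_noIFS h_nosideeffects
end

section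
/- If m G holds for a security invariant m, then offending_flows m G = ∅; conversely, if ¬ m (V,E), then offending_flows m (V,E) is nonempty (some minimal offending set exists, using finiteness of E and m (V,∅)). -/
theorem stmt_18 {α : Type*} (m : Set α → Set (α × α) → Prop)
    (V : Set α) (E : Set (α × α)) (hE : E.Finite)
    (h_empty : ∀ V' : Set α, m V' ∅)
    (h_mono : ∀ (V' : Set α) (E₁ E₂ : Set (α × α)), m V' E₁ → E₂ ⊆ E₁ → m V' E₂) :
    (m V E → offending_flows m V E = ∅) ∧
    (¬ m V E → (offending_flows m V E).Nonempty) := by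
  constructor
  · intro hm
    ext F
    simp only [offending_flows, Set.mem_setOf_eq, Set.mem_empty_iff_false, iff_false]
    rintro ⟨-, hnm, -, -⟩
    exact hnm hm
  · intro hnm
    set S : Set ℕ := {n | ∃ F, F ⊆ E ∧ m V (E \ F) ∧ F.ncard = n} with hS
    have hSne : S.Nonempty := ⟨E.ncard, E, le_refl E, by simpa using h_empty V, rfl⟩
    obtain ⟨F, hFE, hmF, hcard⟩ := Nat.sInf_mem hSne
    refine ⟨F, hFE, hnm, hmF, ?_⟩
    intro e he hme
    have hFfin : F.Finite := hE.subset hFE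
    have hsub : E \ (F \ {e}) ⊆ (E \ F) ∪ {e} := by
      intro x hx
      rcases hx with ⟨hxE, hxF⟩
      by_cases hxe : x = e
      · exact Or.inr (by simp [hxe])
      · exact Or.inl ⟨hxE, fun hxF' => hxF ⟨hxF', by simp [hxe]⟩⟩
    have hm' : m V (E \ (F \ {e})) := h_mono V _ _ hme hsub
    have hlt : (F \ {e}).ncard < F.ncard := by
      have : (F \ {e}) ⊂ F := by
        refine ⟨Set.diff_subset, fun h => ?_⟩
        exact (h he).2 rfl
      exact Set.ncard_lt_ncard this hFfin
    have hmem : (F \ {e}).ncard ∈ S :=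
      ⟨F \ {e}, Set.diff_subset.trans hFE, hm', rfl⟩
    have := Nat.sInf_le hmem
    omega
end

section
/- In the door-lock example, the edge (B,A) cannot be securely made stateful but (B,C) can: for V = {A,B,C}, E = {(B,A),(B,C)}, and the invariant m prohibiting a directed path from A to C (m (V,E') ⟺ (A,C) is not in the transitive closure of E'), the choice E_σ = {(B,A)} violates the ACS compliance criterion ⋃ offending_flows m (α (V,E,E_σ)) ⊆ backflows(E_σ) \ E, while E_σ = {(B,C)} satisfies it. -/
theorem stmt_19 {α : Type*} (A B C : α)
    (hAB : A ≠ B) (hAC : A ≠ C) (hBC : B ≠ C)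
    (m : Set α → Set (α × α) → Prop)
    (hm : ∀ (V : Set α) (E' : Set (α × α)),
      m V E' ↔ ¬ Relation.TransGen (fun x y : α => (x, y) ∈ E') A C) :
    ¬ (⋃₀ offending_flows m {A, B, C}
          (({(B, A), (B, C)} : Set (α × α)) ∪ {(B, A)} ∪ backflows {(B, A)}) ⊆
        backflows {(B, A)} \ ({(B, A), (B, C)} : Set (α × α))) ∧
    (⋃₀ offending_flows m {A, B, C}
          (({(B, A), (B, C)} : Set (α × α)) ∪ {(B, C)} ∪ backflows {(B, C)}) ⊆
        backflows {(B, C)} \ ({(B, A), (B, C)} : Set (α × α))) := by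
  constructor
  · intro hsub
    set E₁ : Set (α × α) :=
      ({(B, A), (B, C)} : Set (α × α)) ∪ {(B, A)} ∪ backflows {(B, A)} with hE₁
    have hmemE : ∀ e : α × α, e ∈ E₁ ↔ e = (B, A) ∨ e = (B, C) ∨ e = (A, B) := by
      intro e
      simp [hE₁, backflows, Prod.ext_iff, and_comm]
      tauto
    have hBC1 : ((B, C) : α × α) ∈ E₁ := by rw [hmemE]; tauto
    have hAB1 : ((A, B) : α × α) ∈ E₁ \ {((B, C) : α × α)} := by
      constructor
      · rw [hmemE]; tauto
      · simp [Prod.ext_iff]; intro h; exact absurd h hAB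
    have hF : ({((B, C) : α × α)} : Set (α × α)) ∈
        offending_flows m {A, B, C} E₁ := by
      refine ⟨?_, ?_, ?_, ?_⟩
      · intro e he; simp at he; subst he; exact hBC1
      · rw [hm]
        push_neg
        exact Relation.TransGen.head (by rw [hmemE]; tauto)
          (Relation.TransGen.single hBC1)
      · rw [hm]
        intro h
        have : ∃ x, ((x, C) : α × α) ∈ E₁ \ {((B, C) : α × α)} := by
          cases h with
          | single h => exact ⟨A, h⟩
          | tail _ h => exact ⟨_, h⟩
        obtain ⟨x, hx1, hx2⟩ := this
        rw [hmemE] at hx1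
        simp [Prod.ext_iff] at hx1 hx2
        rcases hx1 with ⟨_, h⟩ | h | h
        · exact hAC h.symm
        · exact hx2 h
        · exact hBC h.2.symm
      · intro e he
        simp at he; subst he
        rw [hm]
        push_neg
        exact Relation.TransGen.head (Or.inl hAB1)
          (Relation.TransGen.single (Or.inr rfl))
    have : ((B, C) : α × α) ∈ backflows {((B, A) : α × α)} \
        ({(B, A), (B, C)} : Set (α × α)) :=
      hsub ⟨{((B, C) : α × α)}, hF, rfl⟩
    simp [backflows, Prod.ext_iff] at this
  · intro e he
    obtain ⟨F, hF, _⟩ := he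
    exfalso
    apply hF.2.1
    rw [hm]
    intro h
    have : ∃ b, ((A, b) : α × α) ∈
        (({(B, A), (B, C)} : Set (α × α)) ∪ {(B, C)} ∪ backflows {(B, C)}) := by
      obtain ⟨b, hb, _⟩ := (Relation.TransGen.head'_iff).mp h
      exact ⟨b, hb⟩
    obtain ⟨b, hb⟩ := this
    simp [backflows, Prod.ext_iff] at hb
    rcases hb with (⟨h, _⟩ | ⟨h, _⟩) | ⟨_, h⟩
    · exact hAB h
    · exact hAB h
    · exact hAC h
end
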